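/- Let b = (b_1,…,b_m) be a packing with b_1 < t and (m−1)·b_{m−1} > m·g − t (with m ≥ 2). Then for every finite multiset J of positive integers with total size Σ J ≤ m·g − ||b||_1, placing all items of J into the bin of load b_m keeps every bin load strictly below t; in particular b_m + (m·g − ||b||_1) < t, so no sequence of further items consistent with the capacity bound m·g can ever bring a bin load up to t. -/

import Mathlib

/-!
Every bin but the last holds at least `b_{m-1}`, so the total load is at least
`(m-1)·b_{m-1} + b_m` and the free capacity `m·g - ‖b‖₁` is at most
`m·g - (m-1)·b_{m-1} - b_m < t - b_m`. Hence even the smallest bin, receiving all the remaining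
volume, stays below `t`, while every other bin is bounded by `b_1 < t`.
-/

open Finset

theorem Antitone.nsmul_penultimate_add_last_le_sum {M : Type*} [AddCommMonoid M]
    [PartialOrder M] [IsOrderedAddMonoid M] {m : ℕ} (hm : 2 ≤ m) {b : Fin m → M}
    (hb : Antitone b) :
    (m - 1) • b ⟨m - 2, Nat.sub_lt_self two_pos hm⟩ + b ⟨m - 1, Nat.sub_one_lt_of_lt hm⟩ ≤
      ∑ i, b i := by
  set last : Fin m := ⟨m - 1, Nat.sub_one_lt_of_lt hm⟩
  rw [← sum_erase_add _ _ (mem_univ last)]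
  gcongr
  have hcard : #(univ.erase last) = m - 1 := by
    rw [card_erase_of_mem (mem_univ last), card_univ, Fintype.card_fin]
  refine hcard ▸ card_nsmul_le_sum _ b _ fun i hi => hb ?_
  have : i.val ≠ m - 1 := fun h => (mem_erase.mp hi).1 (Fin.ext h)
  change i.val ≤ m - 2
  omega

theorem last_add_free_capacity_lt {m : ℕ} (hm : 2 ≤ m) {b : Fin m → ℕ} (hb : Antitone b)
    {g t : ℕ} (h1 : b ⟨0, Nat.zero_lt_of_lt hm⟩ < t)
    (h2 : m * g < (m - 1) * b ⟨m - 2, Nat.sub_lt_self two_pos hm⟩ + t) :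
    b ⟨m - 1, Nat.sub_one_lt_of_lt hm⟩ + (m * g - ∑ i, b i) < t := by
  have hsum := hb.nsmul_penultimate_add_last_le_sum hm
  rw [smul_eq_mul] at hsum
  -- if `∑ b > m·g` the truncated difference is `0`, and `b_m ≤ b_1 < t` does the job
  have hlast_le_first : b ⟨m - 1, Nat.sub_one_lt_of_lt hm⟩ ≤ b ⟨0, Nat.zero_lt_of_lt hm⟩ :=
    hb (Fin.mk_le_mk.mpr (Nat.zero_le _))
  omega

/-- Let `b` be a packing (bin loads in non-increasing order, `b ⟨0⟩ = b₁` the largest and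
`b ⟨m-1⟩ = b_m` the smallest) for `m ≥ 2` bins of capacity `g`, with target `t > g`.  Assume
`b₁ < t` and `(m−1)·b_{m−1} > m·g − t`.  Then for every finite multiset `J` of positive
integers whose total size satisfies `‖b‖₁ + Σ J ≤ m·g` (i.e. `Σ J ≤ m·g − ‖b‖₁`), placing
all items of `J` into the bin of load `b_m` keeps every bin load strictly below `t`; in
particular `b_m + (m·g − ‖b‖₁) < t`, so no sequence of further items consistent with the
capacity bound `m·g` can ever bring a bin load up to `t`. -/
theorem no_bin_can_reach_target (m g t : ℕ) (hm : 2 ≤ m)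
    (b : Fin m → ℕ) (hb : Antitone b)
    (h1 : b ⟨0, by omega⟩ < t)
    (h2 : m * g < (m - 1) * b ⟨m - 2, by omega⟩ + t) :
    (∀ J : Multiset ℕ, (∀ x ∈ J, 0 < x) → (∑ i, b i) + J.sum ≤ m * g →
      ∀ i : Fin m,
        (if i = (⟨m - 1, by omega⟩ : Fin m) then b i + J.sum else b i) < t) ∧
    b ⟨m - 1, by omega⟩ + (m * g - ∑ i, b i) < t := by
  have hfree := last_add_free_capacity_lt hm hb h1 h2
  refine ⟨fun J _ hJ i => ?_, hfree⟩
  split_ifs with hi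
  · subst hi
    omega
  · exact (hb (Fin.mk_le_of_le_val (Nat.zero_le i.val))).trans_lt h1
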